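/- With notation as above, if T' = (Ob(C)/≅, s) is a strong generic object for Fam(C) → Set, then C is gaunt: every automorphism in C is an identity. -/

import Mathlib

open CategoryTheory

universe w v u

set_option linter.unusedVariables false

/-- A morphism `f : X ⟶ Y` in `E` is cartesian with respect to `p : E ⥤ B`: for any
`g : H ⟶ Y` and factorization `p g = w ≫ p f` there is a unique `h : H ⟶ X` over `w`
with `h ≫ f = g`. -/
def IsCartesianMor {E : Type*} {B : Type*} [Category E] [Category B]
    (p : E ⥤ B) {X Y : E} (f : X ⟶ Y) : Prop :=
  ∀ (H : E) (g : H ⟶ Y) (w : p.obj H ⟶ p.obj X),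
    p.map g = w ≫ p.map f → ∃! h : H ⟶ X, p.map h = w ∧ h ≫ f = g

/-- `p : E ⥤ B` is a (Grothendieck) fibration: every `u : I ⟶ p Y` has a cartesian lift. -/
def IsFibration {E : Type*} {B : Type*} [Category E] [Category B] (p : E ⥤ B) : Prop :=
  ∀ (Y : E) (I : B) (u : I ⟶ p.obj Y),
    ∃ (X : E) (f : X ⟶ Y) (e : p.obj X = I),
      IsCartesianMor p f ∧ p.map f = eqToHom e ≫ u

/-- The category `Fam C` of set-indexed families of objects of `C`: an object is a pair of an
index type `I` and a family `E : I → C`; a morphism `(J, F) ⟶ (I, E)` is a reindexing function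
`u : J → I` together with morphisms `F j ⟶ E (u j)`. -/
structure Fam (C : Type u) [Category.{v} C] where
  I : Type w
  E : I → C

namespace Fam

variable {C : Type u} [Category.{v} C]

instance : Category.{max w v} (Fam.{w} C) where
  Hom X Y := Σ u : X.I → Y.I, ∀ i, X.E i ⟶ Y.E (u i)
  id X := ⟨fun i => i, fun i => 𝟙 _⟩
  comp f g := ⟨fun i => g.1 (f.1 i), fun i => f.2 i ≫ g.2 (f.1 i)⟩
  id_comp f := Sigma.ext rfl (heq_of_eq (funext fun i => Category.id_comp _))
  comp_id f := Sigma.ext rfl (heq_of_eq (funext fun i => Category.comp_id _))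
  assoc f g h := Sigma.ext rfl (heq_of_eq (funext fun i => Category.assoc _ _ _))

/-- The projection `Fam C ⥤ Set` sending an indexed family to its index set. -/
def proj (C : Type u) [Category.{v} C] : Fam.{w} C ⥤ Type w where
  obj X := X.I
  map f := TypeCat.ofHom f.1

end Fam

/-- `T` is a generic object: for every `X` there is a unique base morphism `u : pX ⟶ pT`
over which some cartesian morphism `X ⟶ T` lies. -/
def IsGenericObj {E : Type*} {B : Type*} [Category E] [Category B]
    (p : E ⥤ B) (T : E) : Prop :=
  ∀ X : E, ∃! u : p.obj X ⟶ p.obj T,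
    ∃ f : X ⟶ T, IsCartesianMor p f ∧ p.map f = u

/-- `T` is a strong generic object: every `X` admits a unique cartesian morphism `X ⟶ T`. -/
def IsStrongGenericObj {E : Type*} {B : Type*} [Category E] [Category B]
    (p : E ⥤ B) (T : E) : Prop :=
  ∀ X : E, ∃! f : X ⟶ T, IsCartesianMor p f

/-! A morphism of families whose components are all isomorphisms is cartesian over `Set`. For an
automorphism `f` of `c`, the two morphisms from the one-member family `c` to `T'` with components
`φ c` and `f ≫ φ c` are therefore both cartesian, so strong genericity forces `f ≫ φ c = φ c`,
and `f = 𝟙 c` since `φ c` is an isomorphism. -/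

namespace Fam

variable {C : Type u} [Category.{v} C]

lemma comp_mk {X Y Z : Fam.{w} C} (u : X.I → Y.I) (a : ∀ i, X.E i ⟶ Y.E (u i)) (g : Y ⟶ Z) :
    (⟨u, a⟩ : X ⟶ Y) ≫ g = ⟨g.1 ∘ u, fun i => a i ≫ g.2 (u i)⟩ := rfl

lemma mk_eq_mk_iff {X Y : Fam.{w} C} {u : X.I → Y.I} {a b : ∀ i, X.E i ⟶ Y.E (u i)} :
    (⟨u, a⟩ : X ⟶ Y) = ⟨u, b⟩ ↔ a = b := by
  simp

lemma isCartesianMor_proj_of_isIso {X Y : Fam.{w} C} (f : X ⟶ Y) [∀ i, IsIso (f.2 i)] :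
    IsCartesianMor (proj C) f := by
  intro H g w' hw
  obtain ⟨w, rfl⟩ : ∃ w : H.I → X.I, w' = TypeCat.ofHom w := ⟨fun j => w' j, rfl⟩
  obtain ⟨g₁, g₂⟩ := g
  obtain rfl : g₁ = f.1 ∘ w := funext fun j => types_congr_hom hw j
  refine ⟨⟨w, fun j => g₂ j ≫ inv (f.2 (w j))⟩, ⟨rfl, ?_⟩, ?_⟩
  · simp [comp_mk]
  · rintro ⟨h₁, h₂⟩ ⟨hb, hc⟩
    obtain rfl : h₁ = w := funext fun j => types_congr_hom hb j
    rw [comp_mk, mk_eq_mk_iff] at hc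
    simp [← hc]

def single (c : C) : Fam.{w} C := ⟨PUnit, fun _ => c⟩

end Fam

lemma IsStrongGenericObj.eq_of_isIso {C : Type u} [Category.{v} C] {T : Fam.{w} C}
    (hT : IsStrongGenericObj (Fam.proj C) T) {c : C} {i : T.I} (e e' : c ⟶ T.E i)
    [IsIso e] [IsIso e'] : e = e' := by
  let lift (e : c ⟶ T.E i) : Fam.single c ⟶ T := ⟨fun _ => i, fun _ => e⟩
  have hcart (e : c ⟶ T.E i) [IsIso e] : IsCartesianMor (Fam.proj C) (lift e) :=
    have : ∀ j, IsIso ((lift e).2 j) := fun _ => ‹IsIso e›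
    Fam.isCartesianMor_proj_of_isIso _
  have hlift : lift e = lift e' := (hT _).unique (hcart e) (hcart e')
  exact congrFun (Fam.mk_eq_mk_iff.1 hlift) PUnit.unit

theorem fam_skeleton_strongGeneric_gaunt_general (C : Type w) [SmallCategory C]
    (s : Quotient (isIsomorphicSetoid C) → C)
    (φ : ∀ c : C, c ≅ s (Quotient.mk (isIsomorphicSetoid C) c))
    (hT : IsStrongGenericObj (Fam.proj.{w} C)
      (Fam.mk (Quotient (isIsomorphicSetoid C)) s)) :
    ∀ (c : C) (f : c ⟶ c), IsIso f → f = 𝟙 c := by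
  intro c f _
  have hφ : f ≫ (φ c).hom = 𝟙 c ≫ (φ c).hom := hT.eq_of_isIso _ _
  exact (cancel_mono _).1 hφ

/-- With the setup above, if `T' = (Ob(C)/≅, s)` is a strong generic object for
`Fam C ⥤ Set`, then `C` is gaunt: every automorphism in `C` is an identity. -/
theorem fam_skeleton_strongGeneric_gaunt (C : Type w) [SmallCategory C]
    (s : Quotient (isIsomorphicSetoid C) → C)
    (hs : ∀ q, Quotient.mk (isIsomorphicSetoid C) (s q) = q)
    (φ : ∀ c : C, c ≅ s (Quotient.mk (isIsomorphicSetoid C) c))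
    (hT : IsStrongGenericObj (Fam.proj.{w} C)
      (Fam.mk (Quotient (isIsomorphicSetoid C)) s)) :
    ∀ (c : C) (f : c ⟶ c), IsIso f → f = 𝟙 c :=
  fam_skeleton_strongGeneric_gaunt_general C s φ hT
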